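/- arXiv:1902.03166 — 2 statements merged into one kernel-verified Lean document; each statement's English description precedes it below -/
import Mathlib

section
/- Let L be an arrangement of n lines in the plane such that no six of them are tangent to a common conic (in particular no six are mutually parallel, and no six pass through one point). Then there exist Ω(n^{1/5}) lines of L such that all triangles determined by triples among them have pairwise distinct areas. -/
open scoped Classical

/-- A line in the plane given by the equation `a·x + b·y = c` with `(a,b) ≠ (0,0)`. -/
structure Line where
  a : ℝ
  b : ℝ
  c : ℝ
  hab : (a, b) ≠ (0, 0)

namespace Line

/-- The set of points of a line. -/
def pts (L : Line) : Set (ℝ × ℝ) := {p | L.a * p.1 + L.b * p.2 = L.c}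

/-- The determinant of the directions of two lines. -/
def lineDet (L M : Line) : ℝ := L.a * M.b - L.b * M.a

/-- Two lines are parallel (possibly equal) when their directions are proportional. -/
def Parallel (L M : Line) : Prop := lineDet L M = 0

/-- The intersection point of two non-parallel lines. -/
noncomputable def inter (L M : Line) : ℝ × ℝ :=
  ((L.c * M.b - M.c * L.b) / lineDet L M, (L.a * M.c - M.a * L.c) / lineDet L M)

end Line

/-- Standard Euclidean area of the triangle with vertices `p`, `q`, `r`. -/
noncomputable def triangleArea (p q r : ℝ × ℝ) : ℝ :=
  |(q.1 - p.1) * (r.2 - p.2) - (r.1 - p.1) * (q.2 - p.2)| / 2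

/-- The area of the triangle determined by three (pairwise non-parallel) lines. -/
noncomputable def triArea (L M N : Line) : ℝ :=
  triangleArea (Line.inter L M) (Line.inter L N) (Line.inter M N)

/-- Three lines form a (non-degenerate) triangle when they are pairwise
non-parallel and not concurrent. -/
def FormsTriangle (L M N : Line) : Prop :=
  ¬ Line.Parallel L M ∧ ¬ Line.Parallel L N ∧ ¬ Line.Parallel M N ∧
    Line.inter L M ∉ N.pts

/-- The open region bounded by the triangle formed by three lines: the interior
of the convex hull of the three pairwise intersection points. -/
noncomputable def openTriangle (L M N : Line) : Set (ℝ × ℝ) :=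
  interior (convexHull ℝ {Line.inter L M, Line.inter L N, Line.inter M N})

/-- A family of lines is in general position if no six (distinct) of its
members are tangent to a common conic.  Dually, the tangent lines of a conic
(including the degenerate cases: a point, i.e. a pencil of concurrent lines,
and tangency at infinity, i.e. parallelism) are the lines whose coefficient
triples `(a,b,c)` satisfy a common nonzero homogeneous quadratic equation; so
the condition says no nonzero quadratic form on coefficient space vanishes on
six distinct members of the family. -/
def NoSixTangentToConic (F : Finset Line) : Prop :=
  ¬ ∃ A B C D E G : ℝ, (A, B, C, D, E, G) ≠ (0, 0, 0, 0, 0, 0) ∧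
    ∃ S : Finset Line, S ⊆ F ∧ S.card = 6 ∧
      ∀ l ∈ S, A * l.a ^ 2 + B * l.b ^ 2 + C * l.c ^ 2 +
        D * l.a * l.b + E * l.a * l.c + G * l.b * l.c = 0

/-!
The area of the triangle cut out by `L, M, N` is
`det(L, M, N)² / (2 |det(L, M) det(L, N) det(M, N)|)`, where `det(L, M, N)` is the determinant
of the coefficients and `det(L, M)` that of the directions. Hence for fixed `L, M` and a fixed
area, every admissible third line satisfies one of two quadratic equations in its coefficients,
i.e. is tangent to one of two conics: there are at most 10 of them. Likewise a parallel class has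
at most 5 lines, so we may pass to `N ≥ n / 5` pairwise non-parallel lines.

In place of the rainbow Ramsey theorem we use the deletion method. Keep each line with
probability `p = N^(-4/5) / 8` and delete one line from every surviving pair of distinct triples of
equal area. Such a pair is determined, up to 10 choices of a line not in the first triple, by its
other five lines, so the expected number of surviving pairs is at most `10 N³ p⁴ (3 + pN)²`, which
is at most half the expected number `pN = N^(1/5) / 8` of kept lines.
-/

open Finset

theorem exists_subset_pairwise_not_card_le_mul {α : Type*} {r : α → α → Prop}
    (hrefl : ∀ x, r x x) (hsymm : ∀ x y, r x y → r y x) {F : Finset α} {k : ℕ}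
    (hk : ∀ x ∈ F, #{y ∈ F | r x y} ≤ k) :
    ∃ F' ⊆ F, #F ≤ k * #F' ∧ (F' : Set α).Pairwise fun x y => ¬ r x y := by
  set P : Finset α → Prop := fun s => (s : Set α).Pairwise fun x y => ¬ r x y
  obtain ⟨F', hF', hmax⟩ := exists_max_image {s ∈ F.powerset | P s} card ⟨∅, by simp [P]⟩
  rw [mem_filter, mem_powerset] at hF'
  refine ⟨F', hF'.1, ?_, hF'.2⟩
  -- By maximality, every element of `F` is related to some element of `F'`.
  have hcover : F ⊆ F'.biUnion fun x => {y ∈ F | r x y} := by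
    intro y hy
    by_contra hy'
    simp only [mem_biUnion, mem_filter, not_exists, not_and] at hy'
    have hyF' : y ∉ F' := fun h => hy' y h hy (hrefl y)
    have hins : insert y F' ∈ {s ∈ F.powerset | P s} := by
      rw [mem_filter, mem_powerset]
      refine ⟨insert_subset hy hF'.1, ?_⟩
      simp only [P, coe_insert, Set.pairwise_insert]
      exact ⟨hF'.2, fun x hx _ => ⟨fun hr => hy' x hx hy (hsymm _ _ hr), hy' x hx hy⟩⟩
    have := hmax _ hins
    rw [card_insert_of_notMem hyF'] at this
    omega
  calc #F ≤ #(F'.biUnion fun x => {y ∈ F | r x y}) := card_le_card hcover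
    _ ≤ #F' * k := card_biUnion_le_card_mul _ _ _ fun x hx => hk x (hF'.1 hx)
    _ = k * #F' := mul_comm _ _

theorem sum_ite_mem_le {α : Type*} (F s : Finset α) {p : ℝ} (hp : 0 ≤ p) :
    ∑ x ∈ F, (if x ∈ s then 1 else p) ≤ #s + p * #F := by
  rw [sum_ite, sum_const, sum_const, nsmul_eq_mul, nsmul_eq_mul, mul_one, mul_comm p]
  have hin : (#{x ∈ F | x ∈ s} : ℝ) ≤ #s := by
    exact_mod_cast card_le_card fun x hx => (mem_filter.mp hx).2
  have hout : (#{x ∈ F | x ∉ s} : ℝ) ≤ #F := by exact_mod_cast card_filter_le F _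
  gcongr

section DeletionMethod

variable {α : Type*}

/-- The probability that a `p`-random subset of `V` (each element kept independently with
probability `p`) equals `A`. -/
noncomputable def subsetWeight (V : Finset α) (p : ℝ) (A : Finset α) : ℝ :=
  p ^ #A * (1 - p) ^ (#V - #A)

theorem subsetWeight_pos (V : Finset α) {p : ℝ} (hp0 : 0 < p) (hp1 : p < 1) (A : Finset α) :
    0 < subsetWeight V p A :=
  mul_pos (pow_pos hp0 _) (pow_pos (sub_pos.mpr hp1) _)

theorem sum_subsetWeight (V : Finset α) (p : ℝ) : ∑ A ∈ V.powerset, subsetWeight V p A = 1 := by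
  simp [subsetWeight, sum_pow_mul_eq_add_pow]

theorem sum_Icc_subsetWeight {B V : Finset α} (hBV : B ⊆ V) (p : ℝ) :
    ∑ A ∈ Icc B V, subsetWeight V p A = p ^ #B := by
  have hdisj : ∀ C ∈ (V \ B).powerset, Disjoint B C := fun C hC =>
    disjoint_of_subset_right (mem_powerset.mp hC) disjoint_sdiff
  have hweight : ∀ C ∈ (V \ B).powerset,
      subsetWeight V p (B ∪ C) = p ^ #B * subsetWeight (V \ B) p C := by
    intro C hC
    rw [subsetWeight, subsetWeight, card_union_of_disjoint (hdisj C hC), card_sdiff_of_subset hBV,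
      Nat.sub_sub, pow_add]
    ring
  rw [Icc_eq_image_powerset hBV, sum_image fun C hC C' hC' h => by
      rw [← union_sdiff_cancel_left (hdisj C hC), h, union_sdiff_cancel_left (hdisj C' hC')],
    sum_congr rfl hweight, ← mul_sum, sum_subsetWeight, mul_one]

theorem sum_subsetWeight_mul_card_filter_subset (V : Finset α) {𝓑 : Finset (Finset α)}
    (h𝓑 : ∀ B ∈ 𝓑, B ⊆ V) (p : ℝ) :
    ∑ A ∈ V.powerset, subsetWeight V p A * #{B ∈ 𝓑 | B ⊆ A} = ∑ B ∈ 𝓑, p ^ #B := by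
  simp_rw [card_filter, Nat.cast_sum, mul_sum]
  rw [sum_comm]
  refine sum_congr rfl fun B hB => ?_
  rw [← sum_Icc_subsetWeight (h𝓑 B hB), Icc_eq_filter_powerset, sum_filter]
  exact sum_congr rfl fun A _ => by split_ifs <;> simp

theorem sum_subsetWeight_mul_card (V : Finset α) (p : ℝ) :
    ∑ A ∈ V.powerset, subsetWeight V p A * #A = p * #V := by
  have h := sum_subsetWeight_mul_card_filter_subset V
    (𝓑 := V.powersetCard 1) (fun B hB => (mem_powersetCard.mp hB).1) p
  have hcard : ∀ A ∈ V.powerset, #{B ∈ V.powersetCard 1 | B ⊆ A} = #A := by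
    intro A hA
    have : {B ∈ V.powersetCard 1 | B ⊆ A} = A.powersetCard 1 := by
      ext B
      simp only [mem_filter, mem_powersetCard]
      exact ⟨fun h => ⟨h.2, h.1.2⟩, fun h => ⟨⟨h.1.trans (mem_powerset.mp hA), h.2⟩, h.1⟩⟩
    rw [this, card_powersetCard, Nat.choose_one_right]
  calc ∑ A ∈ V.powerset, subsetWeight V p A * #A
      = ∑ A ∈ V.powerset, subsetWeight V p A * #{B ∈ V.powersetCard 1 | B ⊆ A} :=
        sum_congr rfl fun A hA => by rw [hcard A hA]
    _ = ∑ B ∈ V.powersetCard 1, p ^ #B := h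
    _ = p * #V := by
      rw [sum_congr rfl fun B hB => by rw [(mem_powersetCard.mp hB).2, pow_one], sum_const,
        card_powersetCard, Nat.choose_one_right, nsmul_eq_mul, mul_comm]

theorem exists_card_sub_card_filter_subset_ge (V : Finset α) {𝓑 : Finset (Finset α)}
    (h𝓑 : ∀ B ∈ 𝓑, B ⊆ V) {p : ℝ} (hp0 : 0 < p) (hp1 : p < 1) :
    ∃ A ⊆ V, p * #V - ∑ B ∈ 𝓑, p ^ #B ≤ #A - #{B ∈ 𝓑 | B ⊆ A} := by
  have hmean : ∑ A ∈ V.powerset, subsetWeight V p A * (p * #V - ∑ B ∈ 𝓑, p ^ #B) =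
      ∑ A ∈ V.powerset, subsetWeight V p A * (#A - #{B ∈ 𝓑 | B ⊆ A}) := by
    rw [← sum_mul, sum_subsetWeight, one_mul]
    simp_rw [mul_sub]
    rw [sum_sub_distrib, sum_subsetWeight_mul_card, sum_subsetWeight_mul_card_filter_subset V h𝓑]
  obtain ⟨A, hA, hle⟩ := exists_le_of_sum_le (powerset_nonempty V) hmean.le
  exact ⟨A, mem_powerset.mp hA, le_of_mul_le_mul_left hle (subsetWeight_pos V hp0 hp1 A)⟩

theorem exists_subset_forall_not_subset_card_le_add (A : Finset α) {𝓑 : Finset (Finset α)}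
    (h𝓑 : ∀ B ∈ 𝓑, B.Nonempty) :
    ∃ S ⊆ A, #A ≤ #S + #{B ∈ 𝓑 | B ⊆ A} ∧ ∀ B ∈ 𝓑, ¬ B ⊆ S := by
  induction 𝓑 using Finset.induction_on with
  | empty => exact ⟨A, subset_refl A, by simp, by simp⟩
  | insert B 𝓑 hB ih =>
    obtain ⟨S, hSA, hcard, hS⟩ := ih fun B' hB' => h𝓑 B' (mem_insert_of_mem hB')
    by_cases hBS : B ⊆ S
    · obtain ⟨x, hx⟩ := h𝓑 B (mem_insert_self B 𝓑)
      refine ⟨S.erase x, (erase_subset x S).trans hSA, ?_, ?_⟩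
      · rw [filter_insert, if_pos (hBS.trans hSA),
          card_insert_of_notMem fun h => hB (mem_filter.mp h).1, card_erase_of_mem (hBS hx)]
        omega
      · intro B' hB' hB'S
        rcases mem_insert.mp hB' with rfl | hB'
        · exact notMem_erase x S (hB'S hx)
        · exact hS B' hB' (hB'S.trans (erase_subset x S))
    · refine ⟨S, hSA, hcard.trans ?_, ?_⟩
      · gcongr
        exact subset_insert B 𝓑
      · intro B' hB'
        rcases mem_insert.mp hB' with rfl | hB'
        exacts [hBS, hS B' hB']

/-- The deletion method: a `p`-random subset of `V` has expected size `p·|V|` and contains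
on average `∑ p^|B|` of the sets `B ∈ 𝓑`; deleting a point of each of these leaves a set
containing none of them. -/
theorem exists_subset_forall_not_subset_sub_sum_pow_le_card (V : Finset α)
    {𝓑 : Finset (Finset α)} (h𝓑 : ∀ B ∈ 𝓑, B ⊆ V ∧ B.Nonempty) {p : ℝ} (hp0 : 0 < p)
    (hp1 : p < 1) :
    ∃ S ⊆ V, p * #V - ∑ B ∈ 𝓑, p ^ #B ≤ #S ∧ ∀ B ∈ 𝓑, ¬ B ⊆ S := by
  obtain ⟨A, hAV, hA⟩ :=
    exists_card_sub_card_filter_subset_ge V (fun B hB => (h𝓑 B hB).1) hp0 hp1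
  obtain ⟨S, hSA, hS, h𝓑S⟩ := exists_subset_forall_not_subset_card_le_add A fun B hB => (h𝓑 B hB).2
  refine ⟨S, hSA.trans hAV, ?_, h𝓑S⟩
  have : (#A : ℝ) ≤ #S + #{B ∈ 𝓑 | B ⊆ A} := by exact_mod_cast hS
  linarith

end DeletionMethod

namespace Line

theorem parallel_refl (L : Line) : L.Parallel L := by
  simp only [Parallel, lineDet]; ring

theorem parallel_comm {L M : Line} : L.Parallel M ↔ M.Parallel L := by
  simp only [Parallel, lineDet]; constructor <;> intro h <;> linarith

theorem inter_comm (L M : Line) : L.inter M = M.inter L := by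
  simp only [inter, lineDet, Prod.mk.injEq]
  constructor <;> rw [← neg_div_neg_eq] <;> ring_nf

noncomputable def concurrencyDet (L M N : Line) : ℝ :=
  !![L.a, L.b, L.c; M.a, M.b, M.c; N.a, N.b, N.c].det

theorem concurrencyDet_eq (L M N : Line) : concurrencyDet L M N =
    N.a * (L.b * M.c - L.c * M.b) + N.b * (L.c * M.a - L.a * M.c) + N.c * lineDet L M := by
  simp [concurrencyDet, Matrix.det_fin_three, lineDet]; ring

end Line

open Line

theorem triangleArea_rotate (p q r : ℝ × ℝ) : triangleArea p q r = triangleArea q r p := by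
  unfold triangleArea; ring_nf

theorem triangleArea_swap (p q r : ℝ × ℝ) : triangleArea p q r = triangleArea q p r := by
  unfold triangleArea
  rw [← abs_neg]; ring_nf

theorem triArea_rotate (L M N : Line) : triArea L M N = triArea M N L := by
  rw [triArea, triArea, inter_comm M L, inter_comm N L, triangleArea_rotate (M.inter N)]

theorem triArea_swap (L M N : Line) : triArea L M N = triArea L N M := by
  rw [triArea, triArea, inter_comm N M, triangleArea_swap]

theorem triArea_eq (L M N : Line) (hLM : ¬ L.Parallel M) (hLN : ¬ L.Parallel N)
    (hMN : ¬ M.Parallel N) :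
    triArea L M N =
      concurrencyDet L M N ^ 2 / (2 * |lineDet L M * lineDet L N * lineDet M N|) := by
  have key : ((L.inter N).1 - (L.inter M).1) * ((M.inter N).2 - (L.inter M).2) -
      ((M.inter N).1 - (L.inter M).1) * ((L.inter N).2 - (L.inter M).2)
      = concurrencyDet L M N ^ 2 / (lineDet L M * lineDet L N * lineDet M N) := by
    simp only [Parallel] at hLM hLN hMN
    simp only [inter, concurrencyDet_eq]
    field_simp
    simp only [lineDet]
    ring
  rw [triArea, triangleArea, key, abs_div, abs_pow, sq_abs, div_div, mul_comm]

theorem NoSixTangentToConic.mono {F G : Finset Line} (hF : NoSixTangentToConic F) (hG : G ⊆ F) :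
    NoSixTangentToConic G :=
  fun ⟨A, B, C, D, E, G', h0, S, hS, hS6, hSq⟩ =>
    hF ⟨A, B, C, D, E, G', h0, S, hS.trans hG, hS6, hSq⟩

theorem NoSixTangentToConic.card_filter_le {F : Finset Line} (hF : NoSixTangentToConic F)
    {A B C D E G : ℝ} (h0 : (A, B, C, D, E, G) ≠ (0, 0, 0, 0, 0, 0)) :
    #{l ∈ F | A * l.a ^ 2 + B * l.b ^ 2 + C * l.c ^ 2 +
      D * l.a * l.b + E * l.a * l.c + G * l.b * l.c = 0} ≤ 5 := by
  by_contra! h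
  obtain ⟨S, hS, hS6⟩ := exists_subset_card_eq (show 6 ≤ _ from h)
  exact hF ⟨A, B, C, D, E, G, h0, S, hS.trans (filter_subset _ _), hS6,
    fun l hl => (mem_filter.mp (hS hl)).2⟩

theorem NoSixTangentToConic.card_filter_parallel_le {F : Finset Line}
    (hF : NoSixTangentToConic F) (L : Line) : #{M ∈ F | L.Parallel M} ≤ 5 := by
  have h0 : (L.b ^ 2, L.a ^ 2, (0 : ℝ), -(2 * L.a * L.b), (0 : ℝ), (0 : ℝ)) ≠
      (0, 0, 0, 0, 0, 0) := by
    intro h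
    simp only [Prod.mk.injEq, ne_eq, OfNat.ofNat_ne_zero, not_false_eq_true, pow_eq_zero_iff] at h
    exact L.hab (by rw [h.1, h.2.1])
  refine (card_le_card fun M hM => ?_).trans (hF.card_filter_le h0)
  rw [mem_filter] at hM ⊢
  refine ⟨hM.1, ?_⟩
  have hpar : L.a * M.b - L.b * M.a = 0 := hM.2
  linear_combination (L.a * M.b - L.b * M.a) * hpar

/-- The `c²`-coefficient `det(L, M)²` keeps this conic nonzero when `L`, `M` are not parallel. -/
theorem exists_conic_concurrencyDet_sq (L M : Line) (k : ℝ) :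
    ∃ A B D E G : ℝ, ∀ N : Line,
      concurrencyDet L M N ^ 2 - k * (lineDet L N * lineDet M N) =
        A * N.a ^ 2 + B * N.b ^ 2 + lineDet L M ^ 2 * N.c ^ 2 +
          D * N.a * N.b + E * N.a * N.c + G * N.b * N.c :=
  ⟨(L.b * M.c - L.c * M.b) ^ 2 - k * (L.b * M.b),
    (L.c * M.a - L.a * M.c) ^ 2 - k * (L.a * M.a),
    2 * (L.b * M.c - L.c * M.b) * (L.c * M.a - L.a * M.c) + k * (L.a * M.b + L.b * M.a),
    2 * (L.b * M.c - L.c * M.b) * lineDet L M, 2 * (L.c * M.a - L.a * M.c) * lineDet L M,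
    fun N => by simp only [concurrencyDet_eq, lineDet]; ring⟩

theorem NoSixTangentToConic.card_filter_triArea_eq_le {F : Finset Line}
    (hF : NoSixTangentToConic F) {L M : Line} (hLM : ¬ L.Parallel M) (v : ℝ) :
    #{N ∈ F | ¬ L.Parallel N ∧ ¬ M.Parallel N ∧ triArea L M N = v} ≤ 10 := by
  have hconic : ∀ s : ℝ, #{N ∈ F | concurrencyDet L M N ^ 2 -
      2 * v * s * lineDet L M * (lineDet L N * lineDet M N) = 0} ≤ 5 := by
    intro s
    obtain ⟨A, B, D, E, G, hQ⟩ := exists_conic_concurrencyDet_sq L M (2 * v * s * lineDet L M)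
    simp_rw [hQ]
    refine hF.card_filter_le fun h => hLM ?_
    simp only [Prod.mk.injEq, pow_eq_zero_iff, ne_eq, OfNat.ofNat_ne_zero, not_false_eq_true] at h
    exact h.2.2.1
  refine (card_le_card fun N hN => ?_).trans ((card_union_le _ _).trans
    (add_le_add (hconic 1) (hconic (-1))))
  obtain ⟨hNF, hLN, hMN, rfl⟩ := mem_filter.mp hN
  have hLM' : lineDet L M ≠ 0 := hLM
  have hLN' : lineDet L N ≠ 0 := hLN
  have hMN' : lineDet M N ≠ 0 := hMN
  rw [triArea_eq L M N hLM hLN hMN, mem_union, mem_filter, mem_filter]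
  rcases abs_choice (lineDet L M * lineDet L N * lineDet M N) with h | h <;>
    [left; right] <;> refine ⟨hNF, ?_⟩ <;> rw [h] <;> field_simp <;> ring

theorem NoSixTangentToConic.exists_pairwise_not_parallel_subset {F : Finset Line}
    (hF : NoSixTangentToConic F) :
    ∃ F' ⊆ F, #F ≤ 5 * #F' ∧ (F' : Set Line).Pairwise fun l m => ¬ l.Parallel m :=
  exists_subset_pairwise_not_card_le_mul parallel_refl (fun _ _ => parallel_comm.mp)
    fun L _ => hF.card_filter_parallel_le L

/-- Requiring `f ∉ {a, b, c}` singles out a line new to the first triple: given `a, …, e` it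
leaves at most 10 choices for `f`, each adding one line to the support. -/
def IsAreaCoincidence (a b c d e f : Line) : Prop :=
  a ≠ b ∧ a ≠ c ∧ b ≠ c ∧ d ≠ e ∧ d ≠ f ∧ e ≠ f ∧ f ∉ ({a, b, c} : Finset Line) ∧
    triArea a b c = triArea d e f

noncomputable def areaCoincidenceSupports (F : Finset Line) : Finset (Finset Line) :=
  {t ∈ F ×ˢ F ×ˢ F ×ˢ F ×ˢ F ×ˢ F | match t with
    | (a, b, c, d, e, f) => IsAreaCoincidence a b c d e f}.image fun
    | (a, b, c, d, e, f) => {a, b, c, d, e, f}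

theorem mem_areaCoincidenceSupports {F B : Finset Line} :
    B ∈ areaCoincidenceSupports F ↔ ∃ a ∈ F, ∃ b ∈ F, ∃ c ∈ F, ∃ d ∈ F, ∃ e ∈ F, ∃ f ∈ F,
      IsAreaCoincidence a b c d e f ∧ {a, b, c, d, e, f} = B := by
  simp [areaCoincidenceSupports, and_assoc]

theorem NoSixTangentToConic.card_filter_isAreaCoincidence_le {F : Finset Line}
    (hF : NoSixTangentToConic F) (hpar : (F : Set Line).Pairwise fun l m => ¬ l.Parallel m)
    (a b c : Line) {d e : Line} (hd : d ∈ F) (he : e ∈ F) :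
    #{f ∈ F | IsAreaCoincidence a b c d e f} ≤ 10 := by
  by_cases hde : d = e
  · simp [IsAreaCoincidence, hde]
  refine (card_le_card fun f hf => ?_).trans
    (hF.card_filter_triArea_eq_le (hpar hd he hde) (triArea a b c))
  obtain ⟨hfF, -, -, -, -, hdf, hef, -, harea⟩ := mem_filter.mp hf
  exact mem_filter.mpr ⟨hfF, hpar hd hfF hdf, hpar he hfF hef, harea.symm⟩

theorem IsAreaCoincidence.pow_card_eq {a b c d e f : Line} (h : IsAreaCoincidence a b c d e f)
    (p : ℝ) : p ^ #{a, b, c, d, e, f} =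
      p ^ 4 * (if d ∈ ({a, b, c} : Finset Line) then 1 else p) *
        (if e ∈ ({a, b, c} : Finset Line) then 1 else p) := by
  obtain ⟨hab, hac, hbc, hde, hdf, hef, hf, -⟩ := h
  have hset : ({a, b, c, d, e, f} : Finset Line) =
      insert f (insert e (insert d ({a, b, c} : Finset Line))) := by
    ext; simp only [mem_insert, mem_singleton]; tauto
  have hf' : f ∉ insert e (insert d ({a, b, c} : Finset Line)) := by
    simp only [mem_insert, mem_singleton] at hf ⊢; tauto
  rw [hset, card_insert_of_notMem hf', card_insert_eq_ite, card_insert_eq_ite,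
    card_eq_three.mpr ⟨a, b, c, hab, hac, hbc, rfl⟩]
  by_cases hd : d ∈ ({a, b, c} : Finset Line) <;> by_cases he : e ∈ ({a, b, c} : Finset Line) <;>
    simp [hd, he, hde.symm, pow_succ]

theorem NoSixTangentToConic.sum_pow_card_areaCoincidenceSupports_le {F : Finset Line}
    (hF : NoSixTangentToConic F) (hpar : (F : Set Line).Pairwise fun l m => ¬ l.Parallel m)
    {p : ℝ} (hp : 0 ≤ p) :
    ∑ B ∈ areaCoincidenceSupports F, p ^ #B ≤ 10 * #F ^ 3 * p ^ 4 * (3 + p * #F) ^ 2 := by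
  set w : Finset Line → Line → ℝ := fun s x => if x ∈ s then 1 else p
  calc ∑ B ∈ areaCoincidenceSupports F, p ^ #B
      ≤ ∑ a ∈ F, ∑ b ∈ F, ∑ c ∈ F, ∑ d ∈ F, ∑ e ∈ F,
          ∑ f ∈ F with IsAreaCoincidence a b c d e f, p ^ #{a, b, c, d, e, f} := by
        refine (sum_image_le_of_nonneg fun _ _ => by positivity).trans_eq ?_
        simp only [sum_filter, sum_product]
    _ ≤ ∑ a ∈ F, ∑ b ∈ F, ∑ c ∈ F, ∑ d ∈ F, ∑ e ∈ F,
          10 * p ^ 4 * (w {a, b, c} d * w {a, b, c} e) := by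
        gcongr with a _ b _ c _ d hd e he
        calc _ = ∑ f ∈ F with IsAreaCoincidence a b c d e f,
                p ^ 4 * (w {a, b, c} d * w {a, b, c} e) :=
              sum_congr rfl fun f hf => by rw [(mem_filter.mp hf).2.pow_card_eq, mul_assoc]
          _ ≤ 10 * p ^ 4 * (w {a, b, c} d * w {a, b, c} e) := by
              rw [sum_const, nsmul_eq_mul, mul_assoc]
              gcongr
              exact_mod_cast hF.card_filter_isAreaCoincidence_le hpar a b c hd he
    _ = ∑ a ∈ F, ∑ b ∈ F, ∑ c ∈ F, 10 * p ^ 4 * (∑ d ∈ F, w {a, b, c} d) ^ 2 := by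
        simp only [sq, sum_mul_sum]
        simp only [mul_sum]
    _ ≤ ∑ a ∈ F, ∑ b ∈ F, ∑ c ∈ F, 10 * p ^ 4 * (3 + p * #F) ^ 2 := by
        gcongr with a _ b _ c _
        exact (sum_ite_mem_le F {a, b, c} hp).trans (by gcongr; exact_mod_cast card_le_three)
    _ = 10 * #F ^ 3 * p ^ 4 * (3 + p * #F) ^ 2 := by
        simp only [sum_const, nsmul_eq_mul]; ring

theorem areaCoincidenceSupports_subset_nonempty {F B : Finset Line}
    (hB : B ∈ areaCoincidenceSupports F) : B ⊆ F ∧ B.Nonempty := by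
  obtain ⟨a, ha, b, hb, c, hc, d, hd, e, he, f, hf, -, rfl⟩ := mem_areaCoincidenceSupports.mp hB
  simp only [insert_subset_iff, singleton_subset_iff]
  exact ⟨⟨ha, hb, hc, hd, he, hf⟩, insert_nonempty _ _⟩

def DistinctAreas (S : Finset Line) : Prop :=
  ∀ a ∈ S, ∀ b ∈ S, ∀ c ∈ S, ∀ d ∈ S, ∀ e ∈ S, ∀ f ∈ S,
    a ≠ b → a ≠ c → b ≠ c → d ≠ e → d ≠ f → e ≠ f →
    ({a, b, c} : Finset Line) ≠ ({d, e, f} : Finset Line) → triArea a b c ≠ triArea d e f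

theorem distinctAreas_of_forall_not_subset {F S : Finset Line} (hSF : S ⊆ F)
    (hS : ∀ B ∈ areaCoincidenceSupports F, ¬ B ⊆ S) : DistinctAreas S := by
  intro a ha b hb c hc d hd e he f hf hab hac hbc hde hdf hef hne harea
  have hcoinc : ∀ x ∈ S, ∀ y ∈ S, ∀ z ∈ S, ¬ IsAreaCoincidence a b c x y z := by
    intro x hx y hy z hz h
    refine hS _ (mem_areaCoincidenceSupports.mpr ⟨a, hSF ha, b, hSF hb, c, hSF hc,
      x, hSF hx, y, hSF hy, z, hSF hz, h, rfl⟩) ?_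
    simp only [insert_subset_iff, singleton_subset_iff]
    exact ⟨ha, hb, hc, hx, hy, hz⟩
  have hnew : ¬ ({d, e, f} : Finset Line) ⊆ {a, b, c} := fun h => hne <| Eq.symm <|
    eq_of_subset_of_card_le h (by rw [card_eq_three.mpr ⟨a, b, c, hab, hac, hbc, rfl⟩,
      card_eq_three.mpr ⟨d, e, f, hde, hdf, hef, rfl⟩])
  obtain ⟨x, hx, hxabc⟩ := not_subset.mp hnew
  simp only [mem_insert, mem_singleton] at hx
  rcases hx with rfl | rfl | rfl
  · exact hcoinc e he f hf x hd ⟨hab, hac, hbc, hef, hde.symm, hdf.symm, hxabc,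
      harea.trans (triArea_rotate x e f)⟩
  · exact hcoinc d hd f hf x he ⟨hab, hac, hbc, hdf, hde, hef.symm, hxabc,
      harea.trans (triArea_swap d x f)⟩
  · exact hcoinc d hd e he x hf ⟨hab, hac, hbc, hde, hdf, hef, hxabc, harea⟩

theorem NoSixTangentToConic.exists_subset_distinctAreas {F : Finset Line}
    (hF : NoSixTangentToConic F) (hpar : (F : Set Line).Pairwise fun l m => ¬ l.Parallel m)
    {p : ℝ} (hp0 : 0 < p) (hp1 : p < 1) :
    ∃ S ⊆ F, p * #F - 10 * #F ^ 3 * p ^ 4 * (3 + p * #F) ^ 2 ≤ #S ∧ DistinctAreas S := by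
  obtain ⟨S, hSF, hS, hfree⟩ := exists_subset_forall_not_subset_sub_sum_pow_le_card F
    (fun B hB => areaCoincidenceSupports_subset_nonempty hB) hp0 hp1
  refine ⟨S, hSF, ?_, distinctAreas_of_forall_not_subset hSF hfree⟩
  linarith [hF.sum_pow_card_areaCoincidenceSupports_le hpar hp0.le]

/-- The bound of `exists_subset_distinctAreas` for `#F = x⁵` and `p = 1 / (8 x⁴)`. -/
theorem div_sixteen_le_of_one_le {x : ℝ} (hx : 1 ≤ x) :
    x / 16 ≤ 1 / (8 * x ^ 4) * x ^ 5 -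
      10 * (x ^ 5) ^ 3 * (1 / (8 * x ^ 4)) ^ 4 * (3 + 1 / (8 * x ^ 4) * x ^ 5) ^ 2 := by
  have hx0 : 0 < x := by linarith
  have hsimp : 1 / (8 * x ^ 4) * x ^ 5 -
      10 * (x ^ 5) ^ 3 * (1 / (8 * x ^ 4)) ^ 4 * (3 + 1 / (8 * x ^ 4) * x ^ 5) ^ 2 =
        x / 8 - 10 * (3 + x / 8) ^ 2 / (4096 * x) := by
    field_simp
    ring
  have hsmall : 10 * (3 + x / 8) ^ 2 / (4096 * x) ≤ x / 16 := by
    rw [div_le_iff₀ (by positivity)]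
    nlinarith
  linarith

theorem rpow_one_fifth_pow_five {x : ℝ} (hx : 0 ≤ x) : (x ^ (1 / 5 : ℝ)) ^ 5 = x := by
  rw [one_div]
  exact_mod_cast Real.rpow_inv_natCast_pow hx (by norm_num : 5 ≠ 0)

/-- There is a constant `C > 0` such that any arrangement of `n` lines with no
six of them tangent to a common conic (in particular no six mutually parallel
and no six concurrent) contains at least `C·n^{1/5}` lines, pairwise
non-parallel, all of whose triples determine triangles of pairwise distinct
areas (a concurrent triple counting as area `0`). -/
theorem stmt15 :
    ∃ C : ℝ, 0 < C ∧
      ∀ (n : ℕ) (L : Finset Line), L.card = n → NoSixTangentToConic L →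
        ∃ S ⊆ L, C * (n : ℝ) ^ ((1 : ℝ) / 5) ≤ S.card ∧
          (∀ l₁ ∈ S, ∀ l₂ ∈ S, l₁ ≠ l₂ → ¬ Line.Parallel l₁ l₂) ∧
          ∀ a ∈ S, ∀ b ∈ S, ∀ c ∈ S, ∀ d ∈ S, ∀ e ∈ S, ∀ f ∈ S,
            a ≠ b → a ≠ c → b ≠ c → d ≠ e → d ≠ f → e ≠ f →
            ({a, b, c} : Finset Line) ≠ ({d, e, f} : Finset Line) →
            triArea a b c ≠ triArea d e f := by
  refine ⟨1 / 32, by norm_num, fun n L hLn hL => ?_⟩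
  obtain ⟨F, hFL, hLF, hpar⟩ := hL.exists_pairwise_not_parallel_subset
  rcases F.eq_empty_or_nonempty with rfl | hFne
  · obtain rfl : n = 0 := by simpa [hLn] using hLF
    exact ⟨∅, empty_subset L, by simp, by simp, by simp⟩
  set x := (#F : ℝ) ^ (1 / 5 : ℝ)
  have hx5 : x ^ 5 = #F := rpow_one_fifth_pow_five (Nat.cast_nonneg _)
  have hx1 : 1 ≤ x := Real.one_le_rpow (by exact_mod_cast hFne.card_pos) (by norm_num)
  have hp1 : 1 / (8 * x ^ 4) < 1 := by
    rw [div_lt_one (by positivity)]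
    nlinarith [one_le_pow₀ (n := 4) hx1]
  obtain ⟨S, hSF, hS, hdist⟩ := (hL.mono hFL).exists_subset_distinctAreas hpar
    (by positivity) hp1
  refine ⟨S, hSF.trans hFL, ?_, fun l₁ h₁ l₂ h₂ => hpar (hSF h₁) (hSF h₂), hdist⟩
  have hn : (n : ℝ) ^ (1 / 5 : ℝ) ≤ 2 * x := by
    refine le_of_pow_le_pow_left₀ (by norm_num : 5 ≠ 0) (by positivity) ?_
    rw [rpow_one_fifth_pow_five (Nat.cast_nonneg n), mul_pow, hx5]
    have : (n : ℝ) ≤ 5 * #F := by exact_mod_cast hLn ▸ hLF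
    linarith
  rw [← hx5] at hS
  linarith [div_sixteen_le_of_one_le hx1]
end

section
/- Suppose an arrangement of n lines contains no two parallel lines, and the triangle formed by lines ℓ₁, ℓ₂, ℓ₃ has maximum area among all triangles of the arrangement. Then all maximum-area triangles supported by ℓ₁ lie on the same (closed) side of ℓ₁. -/
open scoped Classical

/-!
Fix `ℓ₀ = L i₁` and describe every other line `M` by its dual point `(u, t)`: in coordinates in
which `ℓ₀` is the `x`-axis, `M` is the line `x = t + u y`. The triangle cut out by `ℓ₀, M, N` then
has area `(t_N - t_M)² / 2|u_M - u_N|` and apex height `(t_N - t_M) / (u_M - u_N)`, and the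
triangle cut out by `M, N, P` has area `D² / 2|u_M - u_N| |u_M - u_P| |u_N - u_P|`, where `D` is
the orientation determinant of the three dual points.

Suppose the maximum-area triangles `ℓ₀ p₁ p₂` and `ℓ₀ p₃ p₄` lie on opposite sides of `ℓ₀`.
A diagonal affine change of the dual plane moves the dual points of `p₃, p₄` to `(0, 0), (1, 1)`
and those of `p₁, p₂` to `(α, X), (α - b², X + b)` with `b > 0`. The four triangles formed by
three of `p₁, …, p₄` have area at most the maximum. Depending on the position of `α` relative to
`1` and to `b²`, each of these four bounds forces the sign of `X` or of `X + b - 1`, and in every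
case two of the forced signs contradict each other.
-/

def orient (p q r : ℝ × ℝ) : ℝ := (q.1 - p.1) * (r.2 - p.2) - (r.1 - p.1) * (q.2 - p.2)

namespace Line

def det3 (L M N : Line) : ℝ :=
  L.a * (M.b * N.c - N.b * M.c) - L.b * (M.a * N.c - N.a * M.c) + L.c * (M.a * N.b - N.a * M.b)

def eval (L : Line) (p : ℝ × ℝ) : ℝ := L.a * p.1 + L.b * p.2 - L.c

lemma normSq_pos (L : Line) : 0 < L.a ^ 2 + L.b ^ 2 := by
  rcases L with ⟨a, b, c, hab⟩
  by_contra h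
  exact hab (by simp only [Prod.mk.injEq]; constructor <;> nlinarith [sq_nonneg a, sq_nonneg b])

lemma det3_rotate (L M N : Line) : det3 L M N = det3 M N L := by
  unfold det3; ring

lemma eval_eq_zero_iff {L : Line} {p : ℝ × ℝ} : L.eval p = 0 ↔ p ∈ L.pts := sub_eq_zero

lemma eval_inter_mul_lineDet {M N : Line} (hMN : lineDet M N ≠ 0) (P : Line) :
    P.eval (inter M N) * lineDet M N = -det3 M N P := by
  unfold eval inter det3
  field_simp
  unfold lineDet
  ring

lemma det3_eq_zero_iff {M N P : Line} (hMN : lineDet M N ≠ 0) :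
    det3 M N P = 0 ↔ inter M N ∈ P.pts := by
  rw [← eval_eq_zero_iff, ← neg_eq_zero, ← eval_inter_mul_lineDet hMN, mul_eq_zero_iff_right hMN]

lemma orient_inter_mul {L M N : Line} (hLM : lineDet L M ≠ 0) (hLN : lineDet L N ≠ 0)
    (hMN : lineDet M N ≠ 0) :
    orient (inter L M) (inter L N) (inter M N) * (lineDet L M * lineDet L N * lineDet M N) =
      det3 L M N ^ 2 := by
  unfold orient inter det3
  field_simp
  unfold lineDet
  ring

variable (ℓ₀ : Line)

/-- When `ℓ₀` is the `x`-axis, `M` is the line `x = t + u y`, where `(u, t) = ℓ₀.dualPt M`. -/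
noncomputable def dualPt (M : Line) : ℝ × ℝ :=
  ((ℓ₀.a * M.a + ℓ₀.b * M.b) / lineDet ℓ₀ M,
    (ℓ₀.c * (ℓ₀.a * M.a + ℓ₀.b * M.b) - M.c * (ℓ₀.a ^ 2 + ℓ₀.b ^ 2)) / lineDet ℓ₀ M)

variable {ℓ₀} {M N P : Line}

lemma dualPt_fst_sub_mul (hM : lineDet ℓ₀ M ≠ 0) (hN : lineDet ℓ₀ N ≠ 0) :
    ((ℓ₀.dualPt M).1 - (ℓ₀.dualPt N).1) * (lineDet ℓ₀ M * lineDet ℓ₀ N) =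
      (ℓ₀.a ^ 2 + ℓ₀.b ^ 2) * lineDet M N := by
  unfold dualPt
  field_simp
  unfold lineDet
  ring

lemma dualPt_snd_sub_mul (hM : lineDet ℓ₀ M ≠ 0) (hN : lineDet ℓ₀ N ≠ 0) :
    ((ℓ₀.dualPt N).2 - (ℓ₀.dualPt M).2) * (lineDet ℓ₀ M * lineDet ℓ₀ N) =
      -((ℓ₀.a ^ 2 + ℓ₀.b ^ 2) * det3 ℓ₀ M N) := by
  unfold dualPt det3
  field_simp
  unfold lineDet
  ring

lemma orient_dualPt_mul (hM : lineDet ℓ₀ M ≠ 0) (hN : lineDet ℓ₀ N ≠ 0)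
    (hP : lineDet ℓ₀ P ≠ 0) :
    orient (ℓ₀.dualPt M) (ℓ₀.dualPt N) (ℓ₀.dualPt P) *
        (lineDet ℓ₀ M * lineDet ℓ₀ N * lineDet ℓ₀ P) =
      (ℓ₀.a ^ 2 + ℓ₀.b ^ 2) ^ 2 * det3 M N P := by
  unfold orient dualPt det3
  field_simp
  unfold lineDet
  ring

lemma dualPt_fst_ne (hM : lineDet ℓ₀ M ≠ 0) (hN : lineDet ℓ₀ N ≠ 0) (hMN : lineDet M N ≠ 0) :
    (ℓ₀.dualPt M).1 - (ℓ₀.dualPt N).1 ≠ 0 := fun h0 =>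
  mul_ne_zero ℓ₀.normSq_pos.ne' hMN (by rw [← dualPt_fst_sub_mul hM hN, h0, zero_mul])

lemma eval_inter_eq_div (hM : lineDet ℓ₀ M ≠ 0) (hN : lineDet ℓ₀ N ≠ 0) (hMN : lineDet M N ≠ 0) :
    ℓ₀.eval (inter M N) =
      ((ℓ₀.dualPt N).2 - (ℓ₀.dualPt M).2) / ((ℓ₀.dualPt M).1 - (ℓ₀.dualPt N).1) := by
  rw [eq_div_iff (dualPt_fst_ne hM hN hMN)]
  unfold eval dualPt inter
  field_simp
  unfold lineDet
  ring

lemma abs_dualPt_fst_sub_mul (hM : lineDet ℓ₀ M ≠ 0) (hN : lineDet ℓ₀ N ≠ 0) :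
    |(ℓ₀.dualPt M).1 - (ℓ₀.dualPt N).1| * |lineDet ℓ₀ M * lineDet ℓ₀ N| =
      (ℓ₀.a ^ 2 + ℓ₀.b ^ 2) * |lineDet M N| := by
  rw [← abs_mul, dualPt_fst_sub_mul hM hN, abs_mul, abs_of_pos ℓ₀.normSq_pos]

end Line

open Line

lemma triArea_mul {L M N : Line} (hLM : lineDet L M ≠ 0) (hLN : lineDet L N ≠ 0)
    (hMN : lineDet M N ≠ 0) :
    triArea L M N * (2 * |lineDet L M * lineDet L N * lineDet M N|) = det3 L M N ^ 2 := by
  have h := congrArg abs (orient_inter_mul hLM hLN hMN)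
  rw [abs_mul, abs_of_nonneg (sq_nonneg (det3 L M N))] at h
  rw [← h]
  unfold triArea triangleArea orient
  ring

lemma triArea_base_mul {ℓ₀ M N : Line} (hM : lineDet ℓ₀ M ≠ 0) (hN : lineDet ℓ₀ N ≠ 0)
    (hMN : lineDet M N ≠ 0) :
    triArea ℓ₀ M N * (2 * (ℓ₀.a ^ 2 + ℓ₀.b ^ 2) * |(ℓ₀.dualPt M).1 - (ℓ₀.dualPt N).1|) =
      ((ℓ₀.dualPt N).2 - (ℓ₀.dualPt M).2) ^ 2 := by
  have hD : lineDet ℓ₀ M * lineDet ℓ₀ N ≠ 0 := mul_ne_zero hM hN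
  apply mul_right_cancel₀ (pow_ne_zero 2 hD)
  calc triArea ℓ₀ M N * (2 * (ℓ₀.a ^ 2 + ℓ₀.b ^ 2) * |(ℓ₀.dualPt M).1 - (ℓ₀.dualPt N).1|) *
        (lineDet ℓ₀ M * lineDet ℓ₀ N) ^ 2
      = 2 * (ℓ₀.a ^ 2 + ℓ₀.b ^ 2) * triArea ℓ₀ M N * |lineDet ℓ₀ M * lineDet ℓ₀ N| *
          (|(ℓ₀.dualPt M).1 - (ℓ₀.dualPt N).1| * |lineDet ℓ₀ M * lineDet ℓ₀ N|) := by
        rw [← sq_abs (lineDet ℓ₀ M * lineDet ℓ₀ N)]; ring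
    _ = (ℓ₀.a ^ 2 + ℓ₀.b ^ 2) ^ 2 *
          (triArea ℓ₀ M N * (2 * |lineDet ℓ₀ M * lineDet ℓ₀ N * lineDet M N|)) := by
        rw [abs_dualPt_fst_sub_mul hM hN, abs_mul (lineDet ℓ₀ M * lineDet ℓ₀ N)]; ring
    _ = (((ℓ₀.dualPt N).2 - (ℓ₀.dualPt M).2) * (lineDet ℓ₀ M * lineDet ℓ₀ N)) ^ 2 := by
        rw [triArea_mul hM hN hMN, dualPt_snd_sub_mul hM hN]; ring
    _ = _ := by ring

lemma triArea_mul_dual {ℓ₀ M N P : Line} (hM : lineDet ℓ₀ M ≠ 0) (hN : lineDet ℓ₀ N ≠ 0)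
    (hP : lineDet ℓ₀ P ≠ 0) (hMN : lineDet M N ≠ 0) (hMP : lineDet M P ≠ 0)
    (hNP : lineDet N P ≠ 0) :
    triArea M N P * (2 * (ℓ₀.a ^ 2 + ℓ₀.b ^ 2) *
      (|(ℓ₀.dualPt M).1 - (ℓ₀.dualPt N).1| * |(ℓ₀.dualPt M).1 - (ℓ₀.dualPt P).1| *
        |(ℓ₀.dualPt N).1 - (ℓ₀.dualPt P).1|)) =
      orient (ℓ₀.dualPt M) (ℓ₀.dualPt N) (ℓ₀.dualPt P) ^ 2 := by
  have hD : lineDet ℓ₀ M * lineDet ℓ₀ N * lineDet ℓ₀ P ≠ 0 := mul_ne_zero (mul_ne_zero hM hN) hP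
  have hD2 : (lineDet ℓ₀ M * lineDet ℓ₀ N * lineDet ℓ₀ P) ^ 2 =
      |lineDet ℓ₀ M * lineDet ℓ₀ N| * |lineDet ℓ₀ M * lineDet ℓ₀ P| *
        |lineDet ℓ₀ N * lineDet ℓ₀ P| := by
    rw [← sq_abs]; simp only [abs_mul]; ring
  apply mul_right_cancel₀ (pow_ne_zero 2 hD)
  calc triArea M N P * (2 * (ℓ₀.a ^ 2 + ℓ₀.b ^ 2) *
        (|(ℓ₀.dualPt M).1 - (ℓ₀.dualPt N).1| * |(ℓ₀.dualPt M).1 - (ℓ₀.dualPt P).1| *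
          |(ℓ₀.dualPt N).1 - (ℓ₀.dualPt P).1|)) * (lineDet ℓ₀ M * lineDet ℓ₀ N * lineDet ℓ₀ P) ^ 2
      = 2 * (ℓ₀.a ^ 2 + ℓ₀.b ^ 2) * triArea M N P *
          ((|(ℓ₀.dualPt M).1 - (ℓ₀.dualPt N).1| * |lineDet ℓ₀ M * lineDet ℓ₀ N|) *
            (|(ℓ₀.dualPt M).1 - (ℓ₀.dualPt P).1| * |lineDet ℓ₀ M * lineDet ℓ₀ P|) *
            (|(ℓ₀.dualPt N).1 - (ℓ₀.dualPt P).1| * |lineDet ℓ₀ N * lineDet ℓ₀ P|)) := by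
        rw [hD2]; ring
    _ = (ℓ₀.a ^ 2 + ℓ₀.b ^ 2) ^ 4 *
          (triArea M N P * (2 * |lineDet M N * lineDet M P * lineDet N P|)) := by
        rw [abs_dualPt_fst_sub_mul hM hN, abs_dualPt_fst_sub_mul hM hP,
          abs_dualPt_fst_sub_mul hN hP, abs_mul, abs_mul]
        ring
    _ = (orient (ℓ₀.dualPt M) (ℓ₀.dualPt N) (ℓ₀.dualPt P) *
          (lineDet ℓ₀ M * lineDet ℓ₀ N * lineDet ℓ₀ P)) ^ 2 := by
        rw [triArea_mul hMN hMP hNP, orient_dualPt_mul hM hN hP]; ring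
    _ = _ := by ring

/-- For the dual points of the lines of an arrangement (`Line.dualPt`), this says that every
triangle of the arrangement has area at most `K / 2(a² + b²)`, see `triArea_mul_dual`. -/
def AreaBounded {ι : Type*} (K : ℝ) (P : ι → ℝ × ℝ) : Prop :=
  ∀ i j k, orient (P i) (P j) (P k) ^ 2 ≤
    K * (|(P i).1 - (P j).1| * |(P i).1 - (P k).1| * |(P j).1 - (P k).1|)

lemma neg_of_sq_le_abs_mul {β γ x : ℝ} (hβ : 0 < β) (hγ : β ^ 2 ≤ γ)
    (h : (β * x + γ) ^ 2 ≤ |γ| * |γ - β ^ 2|) : x < 0 := by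
  have hγ₀ : 0 < γ := (pow_pos hβ 2).trans_le hγ
  rw [abs_of_pos hγ₀, abs_of_nonneg (sub_nonneg.2 hγ)] at h
  nlinarith [mul_pos hβ hγ₀, sq_nonneg x]

lemma neg_lt_of_sq_le_abs_mul {β γ x : ℝ} (hβ : 0 < β) (hγ : γ ≤ 0)
    (h : (β * x + γ) ^ 2 ≤ |γ| * |γ - β ^ 2|) : -β < x := by
  -- `(x, γ) ↦ (-x - β, β² - γ)` negates `β x + γ` and swaps the two factors on the right
  have := neg_of_sq_le_abs_mul (x := -x - β) hβ (γ := β ^ 2 - γ) (by linarith) (by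
    convert h using 1
    · ring
    · rw [abs_sub_comm, sub_sub_cancel_left, abs_neg, mul_comm])
  linarith

namespace AreaBounded

variable {ι : Type*} {K : ℝ} {P : ι → ℝ × ℝ}

lemma false_of_normal_form (hP : AreaBounded 1 P) {i₁ i₂ i₃ i₄ : ι} {b X α : ℝ} (hb : 0 < b)
    (h₁ : P i₁ = (α, X)) (h₂ : P i₂ = (α - b ^ 2, X + b)) (h₃ : P i₃ = (0, 0))
    (h₄ : P i₄ = (1, 1)) : False := by
  have h₁₂₃ := hP i₁ i₂ i₃
  have h₁₂₄ := hP i₁ i₂ i₄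
  have h₁₃₄ := hP i₁ i₃ i₄
  have h₂₃₄ := hP i₂ i₃ i₄
  simp only [h₁, h₂, h₃, h₄, orient, one_mul, mul_one, sub_zero, zero_sub, sub_sub_cancel,
    abs_neg, abs_pow, abs_of_pos hb, abs_one] at h₁₂₃ h₁₂₄ h₁₃₄ h₂₃₄
  replace h₁₂₃ : (b * X + α) ^ 2 ≤ |α| * |α - b ^ 2| :=
    le_of_mul_le_mul_left (by linear_combination h₁₂₃) (pow_pos hb 2)
  replace h₁₂₄ : (b * (X - 1) + (α - 1)) ^ 2 ≤ |α - 1| * |α - 1 - b ^ 2| := by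
    refine le_of_mul_le_mul_left ?_ (pow_pos hb 2)
    rw [sub_right_comm]
    linear_combination h₁₂₄
  replace h₁₃₄ : (1 * -X + α) ^ 2 ≤ |α| * |α - 1 ^ 2| := by
    rw [one_pow]
    linear_combination h₁₃₄
  replace h₂₃₄ : (1 * -(X + b) + (α - b ^ 2)) ^ 2 ≤ |α - b ^ 2| * |α - b ^ 2 - 1 ^ 2| := by
    rw [one_pow]
    linear_combination h₂₃₄
  rcases le_total 1 α with h1 | h1 <;> rcases le_total (b ^ 2) α with hb2 | hb2
  · linarith [neg_of_sq_le_abs_mul hb hb2 h₁₂₃, neg_of_sq_le_abs_mul one_pos (by linarith) h₁₃₄]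
  · have : 1 ≤ b := by nlinarith
    linarith [neg_of_sq_le_abs_mul one_pos (by linarith) h₁₃₄,
      neg_lt_of_sq_le_abs_mul one_pos (by linarith) h₂₃₄]
  · have : b ≤ 1 := by nlinarith
    linarith [neg_of_sq_le_abs_mul hb hb2 h₁₂₃, neg_lt_of_sq_le_abs_mul hb (by linarith) h₁₂₄]
  · linarith [neg_lt_of_sq_le_abs_mul hb (by linarith) h₁₂₄,
      neg_lt_of_sq_le_abs_mul one_pos (by linarith) h₂₃₄]

lemma normalize (hP : AreaBounded K P) {ν τ : ℝ} (hν : ν ≠ 0) (hτ : τ ≠ 0) (u₀ t₀ : ℝ) :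
    AreaBounded (K * |ν| / τ ^ 2) fun i => (((P i).1 - u₀) / ν, ((P i).2 - t₀) / τ) := by
  intro i j k
  have horient : orient (((P i).1 - u₀) / ν, ((P i).2 - t₀) / τ)
      (((P j).1 - u₀) / ν, ((P j).2 - t₀) / τ) (((P k).1 - u₀) / ν, ((P k).2 - t₀) / τ) =
      orient (P i) (P j) (P k) / (ν * τ) := by
    simp only [orient]
    field_simp
    ring
  simp only [horient, div_sub_div_same, sub_sub_sub_cancel_right, abs_div, div_pow]
  refine (div_le_div_of_nonneg_right (hP i j k) (sq_nonneg _)).trans_eq ?_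
  have hν' : |ν| ≠ 0 := abs_ne_zero.2 hν
  field_simp
  rw [sq_abs]

lemma false_of_opposite_of_mul_pos (hP : AreaBounded K P) {i₁ i₂ i₃ i₄ : ι}
    (h₁₂ : ((P i₂).2 - (P i₁).2) ^ 2 = K * |(P i₁).1 - (P i₂).1|)
    (h₃₄ : ((P i₄).2 - (P i₃).2) ^ 2 = K * |(P i₃).1 - (P i₄).1|)
    (hpos : 0 < ((P i₂).2 - (P i₁).2) * ((P i₁).1 - (P i₂).1))
    (hneg : ((P i₄).2 - (P i₃).2) * ((P i₃).1 - (P i₄).1) < 0)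
    (hsame : 0 < ((P i₂).2 - (P i₁).2) * ((P i₄).2 - (P i₃).2)) : False := by
  rw [← neg_sub (P i₄).1, abs_neg] at h₃₄
  rw [← neg_sub (P i₄).1, mul_neg, neg_lt_zero] at hneg
  generalize hν : (P i₄).1 - (P i₃).1 = ν at h₃₄ hneg
  generalize hτ : (P i₄).2 - (P i₃).2 = τ at h₃₄ hneg hsame
  have hτ₀ : τ ≠ 0 := left_ne_zero_of_mul hneg.ne'
  have hν₀ : ν ≠ 0 := right_ne_zero_of_mul hneg.ne'
  have hb : 0 < ((P i₂).2 - (P i₁).2) / τ := div_pos_iff.2 (mul_pos_iff.1 hsame)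
  have hu : 0 < ((P i₁).1 - (P i₂).1) / ν := by
    have h : 0 < ((P i₁).1 - (P i₂).1) * ν * (((P i₂).2 - (P i₁).2) * τ) ^ 2 := by
      linear_combination mul_pos (mul_pos hpos hsame) hneg
    exact div_pos_iff.2 (mul_pos_iff.1 (pos_of_mul_pos_left h (sq_nonneg _)))
  have hb2 : (((P i₂).2 - (P i₁).2) / τ) ^ 2 = ((P i₁).1 - (P i₂).1) / ν := by
    rw [div_pow, h₁₂, ← abs_of_pos hu, abs_div]
    field_simp
    rw [h₃₄]
    ring
  have hQ := hP.normalize hν₀ hτ₀ (P i₃).1 (P i₃).2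
  rw [div_eq_one_iff_eq (pow_ne_zero 2 hτ₀) |>.2 h₃₄.symm] at hQ
  refine hQ.false_of_normal_form (i₁ := i₁) (i₂ := i₂) (i₃ := i₃) (i₄ := i₄)
    hb rfl ?_ (by simp) ?_
  · rw [hb2]
    ext <;> dsimp only <;> ring
  · rw [hν, hτ, div_self hν₀, div_self hτ₀]

theorem false_of_opposite (hP : AreaBounded K P) {i₁ i₂ i₃ i₄ : ι}
    (h₁₂ : ((P i₂).2 - (P i₁).2) ^ 2 = K * |(P i₁).1 - (P i₂).1|)
    (h₃₄ : ((P i₄).2 - (P i₃).2) ^ 2 = K * |(P i₃).1 - (P i₄).1|)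
    (hpos : 0 < ((P i₂).2 - (P i₁).2) * ((P i₁).1 - (P i₂).1))
    (hneg : ((P i₄).2 - (P i₃).2) * ((P i₃).1 - (P i₄).1) < 0) : False := by
  have ht₁₂ : (P i₂).2 - (P i₁).2 ≠ 0 := left_ne_zero_of_mul hpos.ne'
  have ht₃₄ : (P i₄).2 - (P i₃).2 ≠ 0 := left_ne_zero_of_mul hneg.ne
  rcases (mul_ne_zero ht₁₂ ht₃₄).lt_or_gt with hopp | hsame
  · refine hP.false_of_opposite_of_mul_pos (i₁ := i₂) (i₂ := i₁) ?_ h₃₄ (by linarith) hneg ?_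
    · rw [← neg_sub, neg_sq, h₁₂, abs_sub_comm]
    · rw [← neg_sub, neg_mul]
      linarith
  · exact hP.false_of_opposite_of_mul_pos h₁₂ h₃₄ hpos hneg hsame

end AreaBounded

lemma triArea_le_of_ne {ι : Type*} {L : ι → Line}
    (hpar : ∀ i j, i ≠ j → ¬ Parallel (L i) (L j)) {A : ℝ} (hA : 0 ≤ A)
    (hmax : ∀ a b c, FormsTriangle (L a) (L b) (L c) → triArea (L a) (L b) (L c) ≤ A)
    {i j k : ι} (hij : i ≠ j) (hik : i ≠ k) (hjk : j ≠ k) : triArea (L i) (L j) (L k) ≤ A := by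
  by_cases hT : FormsTriangle (L i) (L j) (L k)
  · exact hmax i j k hT
  have hconc : det3 (L i) (L j) (L k) = 0 := by
    rw [det3_eq_zero_iff (hpar i j hij)]
    by_contra hconc
    exact hT ⟨hpar i j hij, hpar i k hik, hpar j k hjk, hconc⟩
  have h := triArea_mul (hpar i j hij) (hpar i k hik) (hpar j k hjk)
  rw [hconc, zero_pow two_ne_zero] at h
  have hD : 2 * |lineDet (L i) (L j) * lineDet (L i) (L k) * lineDet (L j) (L k)| ≠ 0 :=
    mul_ne_zero two_ne_zero <| abs_ne_zero.2 <|
      mul_ne_zero (mul_ne_zero (hpar i j hij) (hpar i k hik)) (hpar j k hjk)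
  rwa [eq_zero_of_ne_zero_of_mul_right_eq_zero hD h]

lemma areaBounded_dualPt {ι : Type*} {L : ι → Line}
    (hpar : ∀ i j, i ≠ j → ¬ Parallel (L i) (L j)) {A : ℝ} (hA : 0 ≤ A)
    (hmax : ∀ a b c, FormsTriangle (L a) (L b) (L c) → triArea (L a) (L b) (L c) ≤ A) (i₀ : ι) :
    AreaBounded (2 * ((L i₀).a ^ 2 + (L i₀).b ^ 2) * A)
      fun j : {j // j ≠ i₀} => (L i₀).dualPt (L j) := by
  rintro ⟨i, hi⟩ ⟨j, hj⟩ ⟨k, hk⟩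
  dsimp only
  rcases eq_or_ne i j with rfl | hij
  · simp [orient]
  rcases eq_or_ne i k with rfl | hik
  · simp [orient]
  rcases eq_or_ne j k with rfl | hjk
  · simp [orient]
  have h0 : ∀ m, m ≠ i₀ → lineDet (L i₀) (L m) ≠ 0 := fun m hm => hpar i₀ m hm.symm
  rw [← triArea_mul_dual (h0 i hi) (h0 j hj) (h0 k hk) (hpar i j hij) (hpar i k hik)
    (hpar j k hjk)]
  exact (mul_le_mul_of_nonneg_right (triArea_le_of_ne hpar hA hmax hij hik hjk)
    (by positivity)).trans_eq (by ring)

theorem false_of_maxArea_on_opposite_sides {ι : Type*} {L : ι → Line}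
    (hpar : ∀ i j, i ≠ j → ¬ Parallel (L i) (L j)) {A : ℝ}
    (hmax : ∀ a b c, FormsTriangle (L a) (L b) (L c) → triArea (L a) (L b) (L c) ≤ A)
    {i₀ p₁ p₂ p₃ p₄ : ι} (h₁₂ : FormsTriangle (L i₀) (L p₁) (L p₂))
    (h₃₄ : FormsTriangle (L i₀) (L p₃) (L p₄))
    (hA₁₂ : triArea (L i₀) (L p₁) (L p₂) = A) (hA₃₄ : triArea (L i₀) (L p₃) (L p₄) = A)
    (hpos : 0 < (L i₀).eval (inter (L p₁) (L p₂)))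
    (hneg : (L i₀).eval (inter (L p₃) (L p₄)) < 0) : False := by
  have hne : ∀ {p}, ¬ Parallel (L i₀) (L p) → p ≠ i₀ := by
    rintro p hp rfl
    exact hp (by unfold Parallel lineDet; ring)
  have hA : 0 ≤ A := hA₁₂ ▸ by unfold triArea triangleArea; positivity
  rw [eval_inter_eq_div h₁₂.1 h₁₂.2.1 h₁₂.2.2.1] at hpos
  rw [eval_inter_eq_div h₃₄.1 h₃₄.2.1 h₃₄.2.2.1] at hneg
  have hbase : ∀ {p q}, FormsTriangle (L i₀) (L p) (L q) → triArea (L i₀) (L p) (L q) = A →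
      (((L i₀).dualPt (L q)).2 - ((L i₀).dualPt (L p)).2) ^ 2 =
        2 * ((L i₀).a ^ 2 + (L i₀).b ^ 2) * A *
          |((L i₀).dualPt (L p)).1 - ((L i₀).dualPt (L q)).1| := by
    intro p q hpq hA
    rw [← triArea_base_mul hpq.1 hpq.2.1 hpq.2.2.1, hA]
    ring
  exact (areaBounded_dualPt hpar hA hmax i₀).false_of_opposite
    (i₁ := ⟨p₁, hne h₁₂.1⟩) (i₂ := ⟨p₂, hne h₁₂.2.1⟩) (i₃ := ⟨p₃, hne h₃₄.1⟩)
    (i₄ := ⟨p₄, hne h₃₄.2.1⟩) (hbase h₁₂ hA₁₂) (hbase h₃₄ hA₃₄)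
    (mul_pos_iff.2 (div_pos_iff.1 hpos)) (mul_neg_iff.2 (div_neg_iff.1 hneg))

theorem stmt16_general (n : ℕ) (L : Fin n → Line)
    (hpar : ∀ i j, i ≠ j → ¬ Line.Parallel (L i) (L j))
    (i₁ i₂ i₃ : Fin n) (hT : FormsTriangle (L i₁) (L i₂) (L i₃))
    (hmax : ∀ a b c : Fin n, FormsTriangle (L a) (L b) (L c) →
      triArea (L a) (L b) (L c) ≤ triArea (L i₁) (L i₂) (L i₃)) :
    ∃ σ : ℝ, (σ = 1 ∨ σ = -1) ∧
      ∀ j k : Fin n, FormsTriangle (L i₁) (L j) (L k) →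
        triArea (L i₁) (L j) (L k) = triArea (L i₁) (L i₂) (L i₃) →
        0 ≤ σ * ((L i₁).a * (Line.inter (L j) (L k)).1 +
          (L i₁).b * (Line.inter (L j) (L k)).2 - (L i₁).c) := by
  have hside : (L i₁).eval (inter (L i₂) (L i₃)) ≠ 0 := by
    rw [Ne, eval_eq_zero_iff, ← det3_eq_zero_iff hT.2.2.1, ← det3_rotate, det3_eq_zero_iff hT.1]
    exact hT.2.2.2
  refine ⟨if 0 < (L i₁).eval (inter (L i₂) (L i₃)) then 1 else -1, by split_ifs <;> simp,
    fun j k hjk harea => ?_⟩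
  change 0 ≤ _ * (L i₁).eval (inter (L j) (L k))
  by_contra hlt
  rw [not_le] at hlt
  split_ifs at hlt with hpos
  · exact false_of_maxArea_on_opposite_sides hpar hmax hT hjk rfl harea hpos
      (by rwa [one_mul] at hlt)
  · exact false_of_maxArea_on_opposite_sides hpar hmax hjk hT harea rfl
      (by rwa [neg_one_mul, neg_lt_zero] at hlt) ((not_lt.1 hpos).lt_of_ne hside)

/-- Suppose an arrangement of `n` lines contains no two parallel lines, and the
triangle formed by the lines `i₁, i₂, i₃` has maximum area among all triangles
of the arrangement.  Then all maximum-area triangles supported by the line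
`ℓ₁ = L i₁` lie on the same closed side of `ℓ₁`: there is a sign `σ ∈ {1, -1}`
such that for every maximum-area triangle formed by `ℓ₁` and two further lines
`j, k`, its third vertex (the intersection of `L j` and `L k`) lies in the
closed half-plane `{p : σ·(a·p₁ + b·p₂ - c) ≥ 0}` determined by `ℓ₁`. -/
theorem stmt16 (n : ℕ) (L : Fin n → Line) (hinj : Function.Injective L)
    (hpar : ∀ i j, i ≠ j → ¬ Line.Parallel (L i) (L j))
    (i₁ i₂ i₃ : Fin n) (hT : FormsTriangle (L i₁) (L i₂) (L i₃))
    (hmax : ∀ a b c : Fin n, FormsTriangle (L a) (L b) (L c) →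
      triArea (L a) (L b) (L c) ≤ triArea (L i₁) (L i₂) (L i₃)) :
    ∃ σ : ℝ, (σ = 1 ∨ σ = -1) ∧
      ∀ j k : Fin n, FormsTriangle (L i₁) (L j) (L k) →
        triArea (L i₁) (L j) (L k) = triArea (L i₁) (L i₂) (L i₃) →
        0 ≤ σ * ((L i₁).a * (Line.inter (L j) (L k)).1 +
          (L i₁).b * (Line.inter (L j) (L k)).2 - (L i₁).c) :=
  stmt16_general n L hpar i₁ i₂ i₃ hT hmax
end
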